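/- For binary perfect phylogenies pi1 of size n1 and pi2 of size n2, the number of unranked unlabeled tree shapes compatible with the perfect phylogeny (pi1, pi2) equals |G(pi1)|·|G(pi2)| − |G(pi1 ∧ pi2)|·(|G(pi1 ∧ pi2)| − 1)/2 if pi1 ∧ pi2 is nonempty, and |G(pi1)|·|G(pi2)| otherwise, where G(pi) denotes the set of unranked unlabeled tree shapes compatible with pi. -/

import Mathlib

/-- A binary perfect phylogeny: a rooted binary tree with positive integer leaf labels
(leaf counts). -/
inductive PP : Type
  | leaf : ℕ → PP
  | node : PP → PP → PP
deriving DecidableEq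

namespace PP

/-- Total number of samples of a binary perfect phylogeny. -/
def size : PP → ℕ
  | leaf n => n
  | node l r => l.size + r.size

/-- One elementary coarsening step: collapsing a cherry (two pendant leaf edges into a
single leaf carrying the sum of the counts), anywhere in the tree; children are unordered. -/
inductive Step : PP → PP → Prop
  | cherry (a b : ℕ) : Step (node (leaf a) (leaf b)) (leaf (a + b))
  | swap (s t : PP) : Step (node s t) (node t s)
  | left {t t' : PP} (s : PP) : Step t t' → Step (node t s) (node t' s)
  | right {t t' : PP} (s : PP) : Step t t' → Step (node s t) (node s t')

/-- `π.Refines σ` (written `π ≤ σ` in the paper) iff `σ` is obtained from `π` by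
sequentially collapsing cherries. -/
def Refines (π σ : PP) : Prop := Relation.ReflTransGen Step π σ

end PP

/-- An unranked unlabeled rooted binary tree (with ordered children; unordered tree
shapes are obtained as the quotient by `Shape.Equiv`). -/
inductive Shape : Type
  | leaf : Shape
  | node : Shape → Shape → Shape

namespace Shape

/-- Number of leaves. -/
def leaves : Shape → ℕ
  | leaf => 1
  | node l r => l.leaves + r.leaves

/-- Equality of rooted binary trees as unordered (unlabeled) tree shapes. -/
inductive Equiv : Shape → Shape → Prop
  | leaf : Equiv leaf leaf
  | node {a b c d : Shape} : Equiv a c → Equiv b d → Equiv (node a b) (node c d)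
  | swap {a b c d : Shape} : Equiv a d → Equiv b c → Equiv (node a b) (node c d)

/-- The perfect phylogeny `P(T)` obtained from a tree shape by assigning count 1 to
every leaf. -/
def toPP : Shape → PP
  | leaf => PP.leaf 1
  | node l r => PP.node l.toPP r.toPP

end Shape

/-- `shapeCount n` is the number of unranked unlabeled binary tree shapes with `n`
leaves (the `n`-th Wedderburn–Etherington number). -/
noncomputable def shapeCount (n : ℕ) : ℕ :=
  Nat.card {q : Quot Shape.Equiv // ∃ t : Shape, Quot.mk _ t = q ∧ t.leaves = n}

/-- `Gc π` is the number of unranked unlabeled tree shapes compatible with the binary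
perfect phylogeny `π`, i.e. whose associated perfect phylogeny refines `π`. -/
noncomputable def Gc (π : PP) : ℕ :=
  Nat.card {q : Quot Shape.Equiv //
    ∃ t : Shape, Quot.mk _ t = q ∧ PP.Refines t.toPP π}

/-!
A tree shape compatible with `(π₁, π₂)` is a node whose two unordered subtrees are compatible
with `π₁` and `π₂`, so `G((π₁, π₂))` is the image of `G(π₁) × G(π₂)` under `(x, y) ↦ {x, y}`.
Two pairs have the same image only if they are `(x, y)` and `(y, x)` with `x ≠ y` both in
`G(π₁) ∩ G(π₂) = G(π₁ ∧ π₂)`, and there are `C(|G(π₁ ∧ π₂)|, 2)` such coincidences. Without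
a common refinement the intersection is empty and the map is injective.
-/

namespace Finset

variable {α : Type*} [DecidableEq α] (a b : Finset α)

theorem image₂_sym2Mk_eq_union :
    image₂ Sym2.mk a b =
      ((a ×ˢ b) \ ((a ∩ b) ×ˢ (a ∩ b))).image (Function.uncurry Sym2.mk) ∪ (a ∩ b).sym2 := by
  have hsub : (a ∩ b) ×ˢ (a ∩ b) ⊆ a ×ˢ b :=
    product_subset_product inter_subset_left inter_subset_right
  rw [← image_uncurry_product, sym2_eq_image, ← image_union, sdiff_union_of_subset hsub]

theorem injOn_sym2Mk_product_sdiff :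
    Set.InjOn (Function.uncurry Sym2.mk)
      (((a ×ˢ b) \ ((a ∩ b) ×ˢ (a ∩ b)) : Finset (α × α)) : Set (α × α)) := by
  rintro ⟨x, y⟩ hxy ⟨x', y'⟩ hxy' h
  simp only [coe_sdiff, coe_product, Set.mem_sdiff, Set.mem_prod, mem_coe, mem_inter] at hxy hxy'
  rcases Sym2.eq_iff.mp h with ⟨rfl, rfl⟩ | ⟨rfl, rfl⟩
  · rfl
  · exact absurd ⟨⟨hxy.1.1, hxy'.1.2⟩, ⟨hxy'.1.1, hxy.1.2⟩⟩ hxy.2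

theorem disjoint_image_sym2Mk_product_sdiff :
    Disjoint (((a ×ˢ b) \ ((a ∩ b) ×ˢ (a ∩ b))).image (Function.uncurry Sym2.mk))
      (a ∩ b).sym2 := by
  rw [disjoint_left]
  rintro _ hz hm
  obtain ⟨⟨x, y⟩, hxy, rfl⟩ := mem_image.mp hz
  exact (mem_sdiff.mp hxy).2 (mem_product.mpr (mk_mem_sym2_iff.mp hm))

theorem two_mul_card_image₂_sym2Mk :
    2 * (#(image₂ Sym2.mk a b) : ℤ) = 2 * #a * #b - #(a ∩ b) * (#(a ∩ b) - 1) := by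
  have hsub : (a ∩ b) ×ˢ (a ∩ b) ⊆ a ×ˢ b :=
    product_subset_product inter_subset_left inter_subset_right
  have hsym2 : 2 * #(a ∩ b).sym2 = (#(a ∩ b) + 1) * #(a ∩ b) := by
    rw [card_sym2, mul_comm, ← Nat.add_one_mul_choose_eq, Nat.choose_one_right]
  rw [image₂_sym2Mk_eq_union, card_union_of_disjoint (disjoint_image_sym2Mk_product_sdiff a b),
    card_image_of_injOn (injOn_sym2Mk_product_sdiff a b), card_sdiff_of_subset hsub,
    card_product, card_product, Nat.cast_add, Nat.cast_sub (by simpa using card_le_card hsub)]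
  push_cast
  linarith [(by exact_mod_cast hsym2 : 2 * (#(a ∩ b).sym2 : ℤ) = (#(a ∩ b) + 1) * #(a ∩ b))]

end Finset

theorem Set.Finite.two_mul_ncard_image2_of_sym2Mk_injective {α β : Type*} {s t : Set α}
    (hs : s.Finite) (ht : t.Finite) (f : α → α → β)
    (hf : ∀ x y x' y', f x y = f x' y' ↔ s(x, y) = s(x', y')) :
    2 * ((Set.image2 f s t).ncard : ℤ) =
      2 * s.ncard * t.ncard - (s ∩ t).ncard * ((s ∩ t).ncard - 1) := by
  classical
  let F : Sym2 α → β := Sym2.lift ⟨f, fun x y => (hf x y y x).2 Sym2.eq_swap⟩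
  have hF : Function.Injective F :=
    Sym2.ind fun x y => Sym2.ind fun x' y' h => (hf x y x' y').1 h
  rw [Set.ncard_eq_toFinset_card _ (hs.image2 f ht), Set.Finite.toFinset_image2 f hs ht,
    Set.ncard_eq_toFinset_card _ hs, Set.ncard_eq_toFinset_card _ ht,
    Set.ncard_eq_toFinset_card _ (hs.inter_of_left t), Set.Finite.toFinset_inter hs ht,
    ← Finset.two_mul_card_image₂_sym2Mk, ← Finset.card_image_of_injective _ hF,
    Finset.image_image₂]
  rfl

namespace Shape

@[refl] theorem Equiv.refl : ∀ t : Shape, Equiv t t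
  | .leaf => .leaf
  | .node l r => .node (Equiv.refl l) (Equiv.refl r)

theorem Equiv.symm {a b : Shape} (h : Equiv a b) : Equiv b a := by
  induction h with
  | leaf => exact .leaf
  | node _ _ ih₁ ih₂ => exact .node ih₁ ih₂
  | swap _ _ ih₁ ih₂ => exact .swap ih₂ ih₁

theorem Equiv.trans {a b c : Shape} (hab : Equiv a b) (hbc : Equiv b c) : Equiv a c := by
  induction hab generalizing c with
  | leaf => exact hbc
  | node _ _ ih₁ ih₂ =>
    cases hbc with
    | node h₁ h₂ => exact .node (ih₁ h₁) (ih₂ h₂)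
    | swap h₁ h₂ => exact .swap (ih₁ h₁) (ih₂ h₂)
  | swap _ _ ih₁ ih₂ =>
    cases hbc with
    | node h₁ h₂ => exact .swap (ih₁ h₂) (ih₂ h₁)
    | swap h₁ h₂ => exact .node (ih₁ h₂) (ih₂ h₁)

theorem equivalence_equiv : Equivalence Equiv := ⟨Equiv.refl, Equiv.symm, Equiv.trans⟩

theorem equiv_node_node_iff {a b c d : Shape} :
    Equiv (node a b) (node c d) ↔ (Equiv a c ∧ Equiv b d) ∨ (Equiv a d ∧ Equiv b c) := by
  refine ⟨fun h => ?_, ?_⟩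
  · cases h with
    | node h₁ h₂ => exact .inl ⟨h₁, h₂⟩
    | swap h₁ h₂ => exact .inr ⟨h₁, h₂⟩
  · rintro (⟨h₁, h₂⟩ | ⟨h₁, h₂⟩)
    exacts [.node h₁ h₂, .swap h₁ h₂]

theorem one_le_leaves : ∀ t : Shape, 1 ≤ t.leaves
  | leaf => le_rfl
  | node l _ => le_add_right (one_le_leaves l)

theorem finite_setOf_leaves_le (n : ℕ) : {t : Shape | t.leaves ≤ n}.Finite := by
  induction n with
  | zero => exact Set.finite_empty.subset fun t ht => absurd ((one_le_leaves t).trans ht) (by simp)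
  | succ n ih =>
    refine ((ih.image2 node ih).insert leaf).subset ?_
    rintro (_ | ⟨l, r⟩) ht
    · exact Set.mem_insert _ _
    · have := one_le_leaves l
      have := one_le_leaves r
      change l.leaves + r.leaves ≤ n + 1 at ht
      exact Set.mem_insert_of_mem _
        ⟨l, show l.leaves ≤ n by omega, r, show r.leaves ≤ n by omega, rfl⟩

theorem size_toPP : ∀ t : Shape, t.toPP.size = t.leaves
  | leaf => rfl
  | node l r => congrArg₂ (· + ·) (size_toPP l) (size_toPP r)

end Shape

abbrev UShape : Type := Quot Shape.Equiv

namespace UShape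

theorem mk_eq_mk {a b : Shape} : (Quot.mk _ a : UShape) = Quot.mk _ b ↔ Shape.Equiv a b :=
  Quot.eq.trans Shape.equivalence_equiv.eqvGen_iff

def node : UShape → UShape → UShape :=
  Quot.map₂ Shape.node (fun a _ _ h => .node (.refl a) h) (fun _ _ b h => .node h (.refl b))

@[simp] theorem node_mk (a b : Shape) :
    node (Quot.mk _ a) (Quot.mk _ b) = Quot.mk _ (Shape.node a b) := rfl

theorem node_eq_node_iff {x y x' y' : UShape} : node x y = node x' y' ↔ s(x, y) = s(x', y') := by
  induction x using Quot.ind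
  induction y using Quot.ind
  induction x' using Quot.ind
  induction y' using Quot.ind
  simp only [node_mk, mk_eq_mk, Shape.equiv_node_node_iff, Sym2.eq_iff]

end UShape

namespace PP

theorem Step.size_eq {π σ : PP} (h : Step π σ) : π.size = σ.size := by
  induction h with
  | cherry => rfl
  | swap => exact Nat.add_comm _ _
  | left _ _ ih => exact congrArg (· + _) ih
  | right _ _ ih => exact congrArg (_ + ·) ih

theorem Refines.size_eq {π σ : PP} (h : Refines π σ) : π.size = σ.size := by
  induction h with
  | refl => rfl
  | tail _ hstep ih => exact ih.trans hstep.size_eq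

theorem Refines.node_mono {a b c d : PP} (hac : Refines a c) (hbd : Refines b d) :
    Refines (node a b) (node c d) :=
  (hac.lift (fun t => PP.node t b) fun _ _ => Step.left b).trans
    (hbd.lift (fun t => PP.node c t) fun _ _ => Step.right c)

theorem Refines.node_swap {a b c d : PP} (had : Refines a d) (hbc : Refines b c) :
    Refines (node a b) (node c d) :=
  (had.node_mono hbc).tail (Step.swap d c)

theorem Refines.eq_of_leaf {n : ℕ} {σ : PP} (h : Refines (leaf n) σ) : σ = leaf n := by
  induction h with
  | refl => rfl
  | tail _ hstep ih => subst ih; cases hstep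

theorem Refines.of_node_node {a b σ : PP} (h : Refines (node a b) σ) :
    ∀ c d, σ = node c d → (Refines a c ∧ Refines b d) ∨ (Refines a d ∧ Refines b c) := by
  induction h with
  | refl => rintro c d ⟨⟩; exact .inl ⟨.refl, .refl⟩
  | tail _ hstep ih =>
    rintro c d rfl
    cases hstep with
    | swap => exact (ih d c rfl).symm
    | left _ h =>
      exact (ih _ d rfl).imp (fun ⟨h₁, h₂⟩ => ⟨h₁.tail h, h₂⟩) fun ⟨h₁, h₂⟩ => ⟨h₁, h₂.tail h⟩
    | right _ h =>
      exact (ih c _ rfl).imp (fun ⟨h₁, h₂⟩ => ⟨h₁, h₂.tail h⟩) fun ⟨h₁, h₂⟩ => ⟨h₁.tail h, h₂⟩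

theorem refines_node_node_iff {a b c d : PP} :
    Refines (node a b) (node c d) ↔
      (Refines a c ∧ Refines b d) ∨ (Refines a d ∧ Refines b c) := by
  refine ⟨fun h => h.of_node_node c d rfl, ?_⟩
  rintro (⟨h₁, h₂⟩ | ⟨h₁, h₂⟩)
  exacts [h₁.node_mono h₂, h₁.node_swap h₂]

end PP

theorem Shape.Equiv.refines_toPP {t t' : Shape} (h : Shape.Equiv t t') :
    PP.Refines t.toPP t'.toPP := by
  induction h with
  | leaf => exact .refl
  | node _ _ ih₁ ih₂ => exact ih₁.node_mono ih₂
  | swap _ _ ih₁ ih₂ => exact ih₁.node_swap ih₂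

/-- The set `G(π)` of the paper. -/
def compatible (π : PP) : Set UShape := {q | ∃ t : Shape, Quot.mk _ t = q ∧ PP.Refines t.toPP π}

theorem Gc_eq_ncard_compatible (π : PP) : Gc π = (compatible π).ncard :=
  Nat.card_coe_set_eq _

theorem mk_mem_compatible_iff {t : Shape} {π : PP} :
    Quot.mk _ t ∈ compatible π ↔ PP.Refines t.toPP π := by
  refine ⟨fun ⟨t', ht', h⟩ => ?_, fun h => ⟨t, rfl, h⟩⟩
  exact (UShape.mk_eq_mk.mp ht').symm.refines_toPP.trans h

theorem finite_compatible (π : PP) : (compatible π).Finite := by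
  refine ((Shape.finite_setOf_leaves_le π.size).image (Quot.mk _)).subset ?_
  rintro _ ⟨t, rfl, h⟩
  exact ⟨t, (t.size_toPP ▸ h.size_eq).le, rfl⟩

theorem compatible_node (π₁ π₂ : PP) :
    compatible (.node π₁ π₂) = Set.image2 UShape.node (compatible π₁) (compatible π₂) := by
  ext q
  constructor
  · rintro ⟨_ | ⟨l, r⟩, rfl, h⟩
    · cases h.eq_of_leaf
    · rcases PP.refines_node_node_iff.mp h with ⟨h₁, h₂⟩ | ⟨h₁, h₂⟩
      · exact ⟨_, ⟨l, rfl, h₁⟩, _, ⟨r, rfl, h₂⟩, rfl⟩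
      · exact ⟨_, ⟨r, rfl, h₂⟩, _, ⟨l, rfl, h₁⟩, UShape.node_eq_node_iff.mpr Sym2.eq_swap⟩
  · rintro ⟨_, ⟨l, rfl, h₁⟩, _, ⟨r, rfl, h₂⟩, rfl⟩
    exact ⟨.node l r, rfl, h₁.node_mono h₂⟩

theorem compatible_inter_eq_of_meet {π₁ π₂ μ : PP} (h₁ : PP.Refines μ π₁)
    (h₂ : PP.Refines μ π₂) (hμ : ∀ c, PP.Refines c π₁ → PP.Refines c π₂ → PP.Refines c μ) :
    compatible π₁ ∩ compatible π₂ = compatible μ := by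
  ext q
  induction q using Quot.ind with
  | mk t =>
    simp only [Set.mem_inter_iff, mk_mem_compatible_iff]
    exact ⟨fun ⟨ht₁, ht₂⟩ => hμ _ ht₁ ht₂, fun ht => ⟨ht.trans h₁, ht.trans h₂⟩⟩

theorem compatible_inter_eq_empty {π₁ π₂ : PP}
    (h : ¬ ∃ μ : PP, PP.Refines μ π₁ ∧ PP.Refines μ π₂) :
    compatible π₁ ∩ compatible π₂ = ∅ := by
  refine Set.eq_empty_of_forall_notMem fun q => ?_
  induction q using Quot.ind with
  | mk t =>
    simp only [Set.mem_inter_iff, mk_mem_compatible_iff]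
    exact fun ht => h ⟨_, ht⟩

/-- Proposition 3: for binary perfect phylogenies `π₁, π₂`, the number of unranked
unlabeled tree shapes compatible with `(π₁, π₂)` equals
`|G(π₁)||G(π₂)| - |G(π₁ ∧ π₂)|(|G(π₁ ∧ π₂)| - 1)/2` when the meet `π₁ ∧ π₂` (the
largest common refinement) is nonempty, and `|G(π₁)||G(π₂)|` when no common refinement
exists. -/
theorem unranked_compatible_node (π₁ π₂ : PP) :
    (∀ μ : PP,
      (PP.Refines μ π₁ ∧ PP.Refines μ π₂ ∧
        ∀ c : PP, PP.Refines c π₁ → PP.Refines c π₂ → PP.Refines c μ) →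
      2 * (Gc (PP.node π₁ π₂) : ℤ) =
        2 * (Gc π₁ : ℤ) * (Gc π₂ : ℤ) - (Gc μ : ℤ) * ((Gc μ : ℤ) - 1)) ∧
    ((¬ ∃ μ : PP, PP.Refines μ π₁ ∧ PP.Refines μ π₂) →
      Gc (PP.node π₁ π₂) = Gc π₁ * Gc π₂) := by
  have hcount := (finite_compatible π₁).two_mul_ncard_image2_of_sym2Mk_injective
    (finite_compatible π₂) UShape.node fun _ _ _ _ => UShape.node_eq_node_iff
  simp only [Gc_eq_ncard_compatible, ← compatible_node] at hcount ⊢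
  constructor
  · rintro μ ⟨h₁, h₂, hμ⟩
    rwa [compatible_inter_eq_of_meet h₁ h₂ hμ] at hcount
  · intro h
    rw [compatible_inter_eq_empty h, Set.ncard_empty, Nat.cast_zero, zero_mul, sub_zero] at hcount
    zify; linarith
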